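/- (Large girth estimate, third case) Let G be a finite simple cubic graph (every vertex has degree exactly 3) with first Betti number b ≥ 6 in which every cycle has length at least 4, and suppose S > 0 is a real number such that every finite simple graph with first Betti number at least b−5, equipped with any probability edge weighting, contains a cycle of weight at most S. Then for every probability edge weighting λ of G there exists a cycle C in G with λ(C) ≤ ((b−4)/(b−1))·S. -/

import Mathlib

attribute [local instance] Classical.propDecidable

/-!
In a triangle-free graph an edge `ab` meets the closed neighbourhood `N[v]` exactly when
`v ∈ N[a] ∪ N[b]`, a set of `deg a + deg b` vertices. For cubic `G` the weights `λ(E(N[v]))` of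
the sets of edges meeting `N[v]` therefore sum to `6` over `v`, and some `v` has
`λ(E(N[v])) ≥ 6 / |V| ≥ 3 / (b - 1)`. Deleting these at most `9` edges isolates the four
vertices of `N[v]` while a vertex at distance two from `v` stays in the old component, so at
least `4` new components appear and the Betti number drops by at most `5`. The hypothesis,
applied to the renormalised weighting of what is left, yields a cycle of weight at most
`(1 - 3 / (b - 1)) S`.
-/

open Finset

theorem Fintype.card_add_card_le_of_surjective {α β : Type*} [Fintype α] [Fintype β]
    {f : α → β} (hf : Function.Surjective f) {y : β} {s : Finset α} (hs : ∀ a ∈ s, f a = y) :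
    Fintype.card β + #s ≤ Fintype.card α + 1 := by
  have hfib : ∀ b, 1 ≤ #{a | f a = b} := fun b ↦
    Finset.card_pos.2 ⟨(hf b).choose, by simpa using (hf b).choose_spec⟩
  have hy : #s ≤ #{a | f a = y} := card_le_card fun a ha ↦ by simpa using hs a ha
  have hrest : #(univ.erase y) ≤ ∑ b ∈ univ.erase y, #{a | f a = b} := by
    simpa using sum_le_sum fun b (_ : b ∈ univ.erase y) ↦ hfib b
  have hcard : Fintype.card α = ∑ b, #{a | f a = b} :=
    card_eq_sum_card_fiberwise fun a _ ↦ mem_coe.2 (mem_univ (f a))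
  rw [hcard, ← add_sum_erase _ _ (mem_univ y)]
  rw [card_erase_of_mem (mem_univ y), card_univ] at hrest
  have : 0 < Fintype.card β := Fintype.card_pos_iff.2 ⟨y⟩
  omega

namespace SimpleGraph

variable {V : Type*} {G : SimpleGraph V}

theorem cliqueFree_three_of_forall_isCycle_four_le_length
    (h : ∀ (x : V) (w : G.Walk x x), w.IsCycle → 4 ≤ w.length) : G.CliqueFree 3 := by
  intro s hs
  obtain ⟨x, w, hw, hlen⟩ := is3Clique_iff_exists_cycle_length_three.1 ⟨s, hs⟩
  have := h x w hw
  omega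

theorem not_adj_of_cliqueFree_three (hG : G.CliqueFree 3) {a b c : V} (hab : G.Adj a b)
    (hac : G.Adj a c) : ¬ G.Adj b c := fun hbc ↦
  hG {a, b, c} (is3Clique_triple_iff.2 ⟨hab, hac, hbc⟩)

theorem card_connectedComponent_le_card [Fintype V] (G : SimpleGraph V) :
    Nat.card G.ConnectedComponent ≤ Fintype.card V := by
  rw [← Nat.card_eq_fintype_card]
  exact Nat.card_le_card_of_surjective _ fun C ↦ C.ind fun v ↦ ⟨v, rfl⟩

theorem card_connectedComponent_add_card_le [Fintype V] {H : SimpleGraph V} (hHG : H ≤ G)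
    {A : Finset V} (hA : ∀ x ∈ A, ∀ y, ¬ H.Adj x y) {r : V} (hr : r ∉ A)
    (hrA : ∀ x ∈ A, G.Reachable x r) :
    Nat.card G.ConnectedComponent + #A ≤ Nat.card H.ConnectedComponent := by
  have : Fintype G.ConnectedComponent := Fintype.ofFinite _
  have : Fintype H.ConnectedComponent := Fintype.ofFinite _
  have hisol : ∀ x ∈ A, ∀ y, H.Reachable x y → x = y := by
    rintro x hx y ⟨_ | ⟨hxz, -⟩⟩
    exacts [rfl, (hA x hx _ hxz).elim]
  have hinj : Set.InjOn H.connectedComponentMk (insert r A : Finset V) := by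
    intro x hx y hy hxy
    simp only [coe_insert, Set.mem_insert_iff, mem_coe] at hx hy
    rcases hx with rfl | hx
    · rcases hy with rfl | hy
      exacts [rfl, (hisol y hy x (ConnectedComponent.exact hxy).symm).symm]
    · exact hisol x hx y (ConnectedComponent.exact hxy)
  have key := Fintype.card_add_card_le_of_surjective (ConnectedComponent.surjective_map_ofLE hHG)
    (y := G.connectedComponentMk r) (s := (insert r A).image H.connectedComponentMk) (by
      simp only [mem_image, mem_insert, forall_exists_index, and_imp]
      rintro _ x (rfl | hx) rfl
      exacts [rfl, ConnectedComponent.sound (hrA x hx)])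
  rw [card_image_of_injOn hinj, card_insert_of_notMem hr] at key
  simp only [Nat.card_eq_fintype_card]
  omega

section ClosedNeighborhood

variable [Fintype V]

noncomputable def closedNeighborFinset (G : SimpleGraph V) (v : V) : Finset V :=
  insert v (G.neighborFinset v)

noncomputable def closedNeighborIncidenceFinset (G : SimpleGraph V) (v : V) : Finset (Sym2 V) :=
  (G.closedNeighborFinset v).biUnion fun x ↦ G.incidenceFinset x

@[simp]
theorem mem_closedNeighborFinset {v x : V} : x ∈ G.closedNeighborFinset v ↔ x = v ∨ G.Adj v x := by
  simp [closedNeighborFinset]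

theorem mem_closedNeighborFinset_comm {v x : V} :
    x ∈ G.closedNeighborFinset v ↔ v ∈ G.closedNeighborFinset x := by
  simp only [mem_closedNeighborFinset, G.adj_comm, eq_comm]

theorem card_closedNeighborFinset (v : V) : #(G.closedNeighborFinset v) = G.degree v + 1 := by
  rw [closedNeighborFinset, card_insert_of_notMem (G.notMem_neighborFinset_self v),
    card_neighborFinset_eq_degree]

theorem mem_closedNeighborIncidenceFinset {v : V} {e : Sym2 V} :
    e ∈ G.closedNeighborIncidenceFinset v ↔
      e ∈ G.edgeSet ∧ ∃ x ∈ G.closedNeighborFinset v, x ∈ e := by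
  simp only [closedNeighborIncidenceFinset, mem_biUnion, mem_incidenceFinset, incidenceSet,
    Set.mem_ofPred_eq]
  tauto

theorem closedNeighborIncidenceFinset_subset_edgeFinset (v : V) :
    G.closedNeighborIncidenceFinset v ⊆ G.edgeFinset := fun _ he ↦
  mem_edgeFinset.2 (mem_closedNeighborIncidenceFinset.1 he).1

theorem closedNeighborFinset_inter_of_adj (hG : G.CliqueFree 3) {a b : V} (hab : G.Adj a b) :
    G.closedNeighborFinset a ∩ G.closedNeighborFinset b = {a, b} := by
  ext x
  simp only [mem_inter, mem_closedNeighborFinset, mem_insert, mem_singleton]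
  constructor
  · rintro ⟨rfl | hax, rfl | hbx⟩
    exacts [Or.inl rfl, Or.inl rfl, Or.inr rfl, (not_adj_of_cliqueFree_three hG hab hax hbx).elim]
  · rintro (rfl | rfl)
    exacts [⟨Or.inl rfl, Or.inr hab.symm⟩, ⟨Or.inr hab, Or.inl rfl⟩]

theorem card_filter_mem_closedNeighborIncidenceFinset (hG : G.CliqueFree 3) {a b : V}
    (hab : G.Adj a b) :
    #{v | s(a, b) ∈ G.closedNeighborIncidenceFinset v} = G.degree a + G.degree b := by
  have hfilter : ({v | s(a, b) ∈ G.closedNeighborIncidenceFinset v} : Finset V) =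
      G.closedNeighborFinset a ∪ G.closedNeighborFinset b := by
    ext v
    simp only [mem_filter, mem_univ, true_and, mem_closedNeighborIncidenceFinset, mem_edgeSet,
      Sym2.mem_iff, and_or_left, exists_or, exists_eq_right, mem_union, hab, true_and]
    rw [mem_closedNeighborFinset_comm (x := a), mem_closedNeighborFinset_comm (x := b)]
  have hunion := card_union_add_card_inter (G.closedNeighborFinset a) (G.closedNeighborFinset b)
  rw [closedNeighborFinset_inter_of_adj hG hab, card_pair hab.ne, card_closedNeighborFinset,
    card_closedNeighborFinset] at hunion
  rw [hfilter]
  omega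

theorem sum_sum_closedNeighborIncidenceFinset (hG : G.CliqueFree 3) {d : ℕ}
    (hreg : G.IsRegularOfDegree d) (lam : Sym2 V → ℝ) :
    ∑ v, ∑ e ∈ G.closedNeighborIncidenceFinset v, lam e = 2 * d * ∑ e ∈ G.edgeFinset, lam e := by
  rw [sum_comm' (t' := G.edgeFinset) (s' := fun e ↦ {v | e ∈ G.closedNeighborIncidenceFinset v})
    fun v e ↦ by
      simpa using fun he ↦ closedNeighborIncidenceFinset_subset_edgeFinset v he, mul_sum]
  refine sum_congr rfl fun e he ↦ ?_
  induction e using Sym2.ind with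
  | _ a b =>
    rw [sum_const, card_filter_mem_closedNeighborIncidenceFinset hG (G.mem_edgeFinset.1 he),
      hreg.degree_eq, hreg.degree_eq, nsmul_eq_mul]
    push_cast
    ring

theorem card_closedNeighborIncidenceFinset_le {d : ℕ} (hreg : G.IsRegularOfDegree d) (v : V) :
    #(G.closedNeighborIncidenceFinset v) ≤ d * d := by
  have hsub : G.closedNeighborIncidenceFinset v ⊆ G.incidenceFinset v ∪
      (G.neighborFinset v).biUnion fun u ↦ G.incidenceFinset u \ G.incidenceFinset v := by
    intro e he
    obtain ⟨heE, x, hx, hxe⟩ := mem_closedNeighborIncidenceFinset.1 he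
    by_cases hve : v ∈ e
    · exact mem_union_left _ ((G.mem_incidenceFinset v e).2 ⟨heE, hve⟩)
    · rcases mem_closedNeighborFinset.1 hx with rfl | hvx
      · exact (hve hxe).elim
      · refine mem_union_right _ (mem_biUnion.2 ⟨x, (G.mem_neighborFinset v x).2 hvx, ?_⟩)
        simp only [mem_sdiff, mem_incidenceFinset]
        exact ⟨⟨heE, hxe⟩, fun h ↦ hve h.2⟩
  have hnbr : ∀ u ∈ G.neighborFinset v, #(G.incidenceFinset u \ G.incidenceFinset v) ≤ d - 1 := by
    intro u hu
    have hvu : s(v, u) ∈ G.incidenceFinset u :=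
      (G.mem_incidenceFinset u _).2 ⟨(G.mem_neighborFinset v u).1 hu, Sym2.mem_mk_right v u⟩
    have hvv : s(v, u) ∈ G.incidenceFinset v :=
      (G.mem_incidenceFinset v _).2 ⟨(G.mem_neighborFinset v u).1 hu, Sym2.mem_mk_left v u⟩
    calc #(G.incidenceFinset u \ G.incidenceFinset v)
        ≤ #((G.incidenceFinset u).erase s(v, u)) :=
          card_le_card fun e he ↦ by
            rw [mem_sdiff] at he
            exact mem_erase.2 ⟨fun h ↦ he.2 (h ▸ hvv), he.1⟩
      _ = d - 1 := by rw [card_erase_of_mem hvu, card_incidenceFinset_eq_degree, hreg.degree_eq]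
  calc #(G.closedNeighborIncidenceFinset v)
      ≤ #(G.incidenceFinset v) + d * (d - 1) := by
        refine (card_le_card hsub).trans ((card_union_le _ _).trans (Nat.add_le_add_left ?_ _))
        have := card_biUnion_le_card_mul _ _ _ hnbr
        rwa [card_neighborFinset_eq_degree, hreg.degree_eq] at this
    _ = d * d := by
        rw [card_incidenceFinset_eq_degree, hreg.degree_eq]
        have := Nat.le_mul_self d
        rw [Nat.mul_sub_one]
        omega

theorem exists_mul_sum_le_card_mul_sum_closedNeighborIncidenceFinset [Nonempty V]
    (hG : G.CliqueFree 3) {d : ℕ} (hreg : G.IsRegularOfDegree d) (lam : Sym2 V → ℝ) :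
    ∃ v, 2 * d * ∑ e ∈ G.edgeFinset, lam e ≤
      Fintype.card V * ∑ e ∈ G.closedNeighborIncidenceFinset v, lam e := by
  obtain ⟨v, -, hv⟩ := exists_le_of_sum_le (s := univ) univ_nonempty
    (f := fun _ ↦ 2 * d * ∑ e ∈ G.edgeFinset, lam e)
    (g := fun v ↦ Fintype.card V * ∑ e ∈ G.closedNeighborIncidenceFinset v, lam e) <| by
      refine le_of_eq ?_
      rw [sum_const, card_univ, nsmul_eq_mul, ← mul_sum,
        sum_sum_closedNeighborIncidenceFinset hG hreg]
  exact ⟨v, hv⟩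

theorem not_adj_deleteEdges_closedNeighborIncidenceFinset {v x : V}
    (hx : x ∈ G.closedNeighborFinset v) (y : V) :
    ¬ (G.deleteEdges (G.closedNeighborIncidenceFinset v)).Adj x y := fun hxy ↦
  (deleteEdges_adj.1 hxy).2 <| mem_closedNeighborIncidenceFinset.2
    ⟨(deleteEdges_adj.1 hxy).1, x, hx, Sym2.mem_mk_left x y⟩

theorem exists_adj_notMem_closedNeighborFinset (hG : G.CliqueFree 3) {v u : V} (hvu : G.Adj v u)
    (hu : 2 ≤ G.degree u) : ∃ r, G.Adj u r ∧ r ∉ G.closedNeighborFinset v := by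
  obtain ⟨r, hr, hrv⟩ := exists_mem_ne (s := G.neighborFinset u)
    (by rwa [card_neighborFinset_eq_degree]) v
  rw [mem_neighborFinset] at hr
  exact ⟨r, hr, by simpa [hrv] using not_adj_of_cliqueFree_three hG hvu.symm hr⟩

theorem card_edgeFinset_add_card_connectedComponent_le_deleteEdges (hG : G.CliqueFree 3)
    (hreg : G.IsRegularOfDegree 3) (v : V) :
    #G.edgeFinset + Nat.card G.ConnectedComponent ≤
      #(G.edgeFinset \ G.closedNeighborIncidenceFinset v) +
        Nat.card (G.deleteEdges (G.closedNeighborIncidenceFinset v)).ConnectedComponent + 5 := by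
  obtain ⟨u, hvu⟩ : ∃ u, G.Adj v u := by
    simpa using G.degree_pos_iff_exists_adj v |>.1 (by rw [hreg.degree_eq]; norm_num)
  obtain ⟨r, hur, hr⟩ :=
    exists_adj_notMem_closedNeighborFinset hG hvu (by rw [hreg.degree_eq]; norm_num)
  have hreach : ∀ x ∈ G.closedNeighborFinset v, G.Reachable x r := by
    intro x hx
    have hxv : G.Reachable x v := by
      rcases mem_closedNeighborFinset.1 hx with rfl | hvx
      exacts [Reachable.refl x, hvx.symm.reachable]
    exact hxv.trans (hvu.reachable.trans hur.reachable)
  have hcomp := card_connectedComponent_add_card_le (G.deleteEdges_le _)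
    (fun x hx ↦ not_adj_deleteEdges_closedNeighborIncidenceFinset hx) hr hreach
  have hedges := card_sdiff_of_subset (closedNeighborIncidenceFinset_subset_edgeFinset (G := G) v)
  have hstar := card_closedNeighborIncidenceFinset_le hreg v
  have hsub := card_le_card (closedNeighborIncidenceFinset_subset_edgeFinset (G := G) v)
  rw [card_closedNeighborFinset, hreg.degree_eq] at hcomp
  omega

theorem exists_heavy_closedNeighborhood_deletion [Nonempty V] (hG : G.CliqueFree 3)
    (hreg : G.IsRegularOfDegree 3) (lam : Sym2 V → ℝ) :
    ∃ H ≤ G, #G.edgeFinset + Nat.card G.ConnectedComponent ≤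
        #H.edgeFinset + Nat.card H.ConnectedComponent + 5 ∧
      6 * ∑ e ∈ G.edgeFinset, lam e ≤
        Fintype.card V * (∑ e ∈ G.edgeFinset, lam e - ∑ e ∈ H.edgeFinset, lam e) := by
  obtain ⟨v, hv⟩ := exists_mul_sum_le_card_mul_sum_closedNeighborIncidenceFinset hG hreg lam
  have hsplit := sum_sdiff (f := lam) (closedNeighborIncidenceFinset_subset_edgeFinset (G := G) v)
  refine ⟨G.deleteEdges (G.closedNeighborIncidenceFinset v), G.deleteEdges_le _, ?_, ?_⟩
  · rw [edgeFinset_deleteEdges]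
    exact card_edgeFinset_add_card_connectedComponent_le_deleteEdges hG hreg v
  · rw [edgeFinset_deleteEdges, ← hsplit, add_sub_cancel_left]
    norm_num at hv
    linarith

end ClosedNeighborhood

theorem exists_isCycle_sum_le_mul_sum [Fintype V] {S : ℝ}
    (hsys : ∀ μ : Sym2 V → ℝ, (∀ e ∈ G.edgeFinset, 0 ≤ μ e) → ∑ e ∈ G.edgeFinset, μ e = 1 →
      ∃ (x : V) (w : G.Walk x x), w.IsCycle ∧ ∑ e ∈ w.edges.toFinset, μ e ≤ S)
    (hE : G.edgeFinset.Nonempty) {lam : Sym2 V → ℝ} (hlam : ∀ e ∈ G.edgeFinset, 0 ≤ lam e) :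
    ∃ (x : V) (w : G.Walk x x), w.IsCycle ∧
      ∑ e ∈ w.edges.toFinset, lam e ≤ S * ∑ e ∈ G.edgeFinset, lam e := by
  have hsub : ∀ {x : V} (w : G.Walk x x), w.edges.toFinset ⊆ G.edgeFinset := fun w e he ↦
    mem_edgeFinset.2 (w.edges_subset_edgeSet (List.mem_toFinset.1 he))
  rcases (sum_nonneg hlam).eq_or_lt with htot | htot
  · have hcard : (0 : ℝ) < #G.edgeFinset := by exact_mod_cast hE.card_pos
    obtain ⟨x, w, hw, -⟩ := hsys (fun _ ↦ (#G.edgeFinset : ℝ)⁻¹)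
      (fun _ _ ↦ inv_nonneg.2 hcard.le) (by simp [hcard.ne'])
    refine ⟨x, w, hw, ?_⟩
    calc ∑ e ∈ w.edges.toFinset, lam e ≤ ∑ e ∈ G.edgeFinset, lam e :=
          sum_le_sum_of_subset_of_nonneg (hsub w) fun e he _ ↦ hlam e he
      _ = S * ∑ e ∈ G.edgeFinset, lam e := by rw [← htot, mul_zero]
  · obtain ⟨x, w, hw, hwS⟩ := hsys (fun e ↦ lam e / ∑ e ∈ G.edgeFinset, lam e)
      (fun e he ↦ div_nonneg (hlam e he) htot.le) (by rw [← sum_div, div_self htot.ne'])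
    exact ⟨x, w, hw, by rwa [← sum_div, div_le_iff₀ htot] at hwS⟩

end SimpleGraph

open SimpleGraph in
/-- Large girth estimate, part (3) (Lemma 3.4 of the paper): if `G` is a cubic graph with
first Betti number `b ≥ 6` (encoded by `|E| + c = |V| + b`) in which every cycle has length
at least `4`, and if every graph of first Betti number at least `b − 5` with a probability
edge weighting has a cycle of weight at most `S > 0`, then every probability edge weighting
of `G` admits a cycle of weight at most `((b−4)/(b−1))·S`. -/
theorem large_girth_estimate_three {V : Type} [Fintype V] (G : SimpleGraph V)
    (hcubic : ∀ v : V, G.degree v = 3)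
    (b : ℕ) (hb : 6 ≤ b)
    (hbetti : G.edgeFinset.card + Nat.card G.ConnectedComponent = Fintype.card V + b)
    (hgirth : ∀ (x : V) (w : G.Walk x x), w.IsCycle → 4 ≤ w.length)
    (S : ℝ) (hSpos : 0 < S)
    (hsys : ∀ (V' : Type) [Fintype V'] (G' : SimpleGraph V') (b' : ℕ),
      G'.edgeFinset.card + Nat.card G'.ConnectedComponent = Fintype.card V' + b' →
      b - 5 ≤ b' →
      ∀ lam' : Sym2 V' → ℝ, (∀ e ∈ G'.edgeFinset, 0 ≤ lam' e) →
        (∑ e ∈ G'.edgeFinset, lam' e = 1) →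
        ∃ (x : V') (w : G'.Walk x x), w.IsCycle ∧ ∑ e ∈ w.edges.toFinset, lam' e ≤ S)
    (lam : Sym2 V → ℝ) (hnn : ∀ e ∈ G.edgeFinset, 0 ≤ lam e)
    (hsum : ∑ e ∈ G.edgeFinset, lam e = 1) :
    ∃ (x : V) (w : G.Walk x x), w.IsCycle ∧
      ∑ e ∈ w.edges.toFinset, lam e ≤ (((b : ℝ) - 4) / ((b : ℝ) - 1)) * S := by
  obtain ⟨e, -⟩ := nonempty_of_sum_ne_zero (hsum.trans_ne one_ne_zero)
  have : Nonempty V := ⟨e.out.1⟩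
  have hhand := G.sum_degrees_eq_twice_card_edges
  simp only [hcubic, sum_const, card_univ, smul_eq_mul] at hhand
  have hc : 0 < Nat.card G.ConnectedComponent := Nat.card_pos
  obtain ⟨H, hHG, hbettiH, hweight⟩ := exists_heavy_closedNeighborhood_deletion
    (cliqueFree_three_of_forall_isCycle_four_le_length hgirth) hcubic lam
  have hcH := card_connectedComponent_le_card H
  obtain ⟨x, w, hw, hwS⟩ := exists_isCycle_sum_le_mul_sum
    (hsys V H (#H.edgeFinset + Nat.card H.ConnectedComponent - Fintype.card V) (by omega)
      (by omega)) (card_pos.1 (by omega)) (fun e he ↦ hnn e (edgeFinset_mono hHG he))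
  refine ⟨x, w.mapLe hHG, hw.mapLe hHG, ?_⟩
  -- `3 |V| = 2 |E|` turns the Betti number into `b = |V| / 2 + c` with `c ≥ 1`
  have hcard : Fintype.card V + 2 ≤ 2 * b := by omega
  have hn : (Fintype.card V : ℝ) + 2 ≤ 2 * b := by exact_mod_cast hcard
  have hbR : (6 : ℝ) ≤ b := by exact_mod_cast hb
  have hrest : ∑ e ∈ H.edgeFinset, lam e ≤ ((b : ℝ) - 4) / ((b : ℝ) - 1) := by
    rw [hsum] at hweight
    have hW : 0 ≤ 1 - ∑ e ∈ H.edgeFinset, lam e :=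
      (pos_of_mul_pos_right (by linarith) (Nat.cast_nonneg (Fintype.card V))).le
    rw [le_div_iff₀ (by linarith)]
    nlinarith [mul_le_mul_of_nonneg_right hn hW]
  rw [Walk.edges_mapLe_eq_edges]
  calc _ ≤ S * ∑ e ∈ H.edgeFinset, lam e := hwS
    _ ≤ _ := by rw [mul_comm]; exact mul_le_mul_of_nonneg_right hrest hSpos.le
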